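/- arXiv:2103.04317 — 8 statements merged into one kernel-verified Lean document; each statement's English description precedes it below -/
import Mathlib

section
/- Let H be a subgroup of S_n and χ an irreducible character of H. Then for every positive semidefinite n×n complex matrix A, the generalized matrix function d^H_χ(A) = Σ_{σ∈H} χ(σ) ∏_{t=1}^n A_{t,σ(t)} is a nonnegative real number. -/
/-!
Write `A = C * Cᴴ` and `y g = ∏ t, C t (g t)` for `g : Fin n → Fin n`. Expanding the product,
`∏ t, A t (σ t) = ⟪y, W σ y⟫`, where `W` is the permutation representation of `H` on functions
`Fin n → Fin n` by precomposition. Averaging a Hermitian form over `H` makes the representation on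
`V` unitary in a suitable basis, so `χ = trace ∘ U` with `U` unitary, and the sum becomes
`⟪y, (∑ σ, trace (U σ) • W σ) y⟫`. That matrix is a partial trace of `∑ σ, U σ ⊗ W σ`, which is
`|H|` times the orthogonal projection onto the invariants of the unitary representation `U ⊗ W`,
hence positive semidefinite.
-/

open scoped ComplexOrder
open CategoryTheory

open Matrix
open scoped Kronecker

section UnitaryRepresentation

variable {G : Type*} [Group G] [Fintype G] {𝕜 : Type*} [RCLike 𝕜]
  {ι κ : Type*} [Fintype ι] [DecidableEq ι] [Fintype κ] [DecidableEq κ]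

theorem Matrix.posSemidef_sum_unitary (Z : G →* unitaryGroup ι 𝕜) :
    (∑ σ, (Z σ : Matrix ι ι 𝕜)).PosSemidef := by
  set P := ∑ σ, (Z σ : Matrix ι ι 𝕜)
  have hP_herm : Pᴴ = P := by
    rw [conjTranspose_sum]
    exact Fintype.sum_equiv (Equiv.inv G) _ _ fun σ => by
      rw [← star_eq_conjTranspose, ← Unitary.coe_star, Unitary.star_eq_inv, ← map_inv]; rfl
  have hP_sq : Pᴴ * P = (Fintype.card G : 𝕜) • P := by
    rw [hP_herm, Finset.sum_mul_sum, Nat.cast_smul_eq_nsmul, ← Finset.card_univ,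
      ← Finset.sum_const]
    refine Finset.sum_congr rfl fun σ _ => ?_
    exact Fintype.sum_equiv (Equiv.mulLeft σ) _ _ fun τ => by simp
  have hP : P = (Fintype.card G : 𝕜)⁻¹ • (Pᴴ * P) := by
    rw [hP_sq, smul_smul, inv_mul_cancel₀ (by simp), one_smul]
  rw [hP]
  exact (posSemidef_conjTranspose_mul_self P).smul (inv_nonneg.mpr (Nat.cast_nonneg _))

def Matrix.unitaryKronecker (Z : G →* unitaryGroup ι 𝕜) (W : G →* unitaryGroup κ 𝕜) :
    G →* unitaryGroup (ι × κ) 𝕜 where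
  toFun σ :=
    ⟨(Z σ : Matrix ι ι 𝕜) ⊗ₖ (W σ : Matrix κ κ 𝕜), kronecker_mem_unitary (Z σ).2 (W σ).2⟩
  map_one' := Subtype.ext <| by simp
  map_mul' σ τ := Subtype.ext <| by simp [mul_kronecker_mul]

theorem Matrix.posSemidef_sum_trace_smul_unitary (Z : G →* unitaryGroup ι 𝕜)
    (W : G →* unitaryGroup κ 𝕜) :
    (∑ σ, trace (Z σ : Matrix ι ι 𝕜) • (W σ : Matrix κ κ 𝕜)).PosSemidef := by
  have hK := posSemidef_sum_unitary (unitaryKronecker Z W)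
  have h_partialTrace : ∑ σ, trace (Z σ : Matrix ι ι 𝕜) • (W σ : Matrix κ κ 𝕜) =
      ∑ i, (∑ σ, (unitaryKronecker Z W σ : Matrix (ι × κ) (ι × κ) 𝕜)).submatrix (i, ·) (i, ·) := by
    ext a b
    simp only [trace, diag_apply, sum_apply, smul_apply, smul_eq_mul, Finset.sum_mul,
      unitaryKronecker, MonoidHom.coe_mk, OneHom.coe_mk, submatrix_apply, kroneckerMap_apply]
    exact Finset.sum_comm
  rw [h_partialTrace]
  exact posSemidef_sum _ fun i _ => hK.submatrix _

theorem Matrix.posDef_sum_conjTranspose_mul_self (R : G →* Matrix ι ι 𝕜) :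
    (∑ τ, (R τ)ᴴ * R τ).PosDef := by
  classical
  rw [← Finset.add_sum_erase _ _ (Finset.mem_univ 1), map_one, conjTranspose_one, one_mul]
  exact PosDef.one.add_posSemidef
    (posSemidef_sum _ fun τ _ => posSemidef_conjTranspose_mul_self (R τ))

open scoped MatrixOrder Matrix.Norms.L2Operator in
theorem Matrix.exists_unitary_trace_eq (R : G →* Matrix ι ι 𝕜) :
    ∃ U : G →* unitaryGroup ι 𝕜, ∀ σ, trace (U σ : Matrix ι ι 𝕜) = trace (R σ) := by
  set S := ∑ τ, (R τ)ᴴ * R τ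
  have hS_inv (σ : G) : star (R σ) * S * R σ = S := by
    simp only [S, Finset.mul_sum, Finset.sum_mul, star_eq_conjTranspose]
    refine Fintype.sum_equiv (Equiv.mulRight σ) _ _ fun τ => ?_
    simp only [Equiv.coe_mulRight, map_mul, conjTranspose_mul]
    noncomm_ring
  obtain ⟨_, ⟨c, rfl⟩, hcS⟩ : ∃ C, IsUnit C ∧ S = star C * C :=
    CStarAlgebra.isStrictlyPositive_iff_eq_star_mul_self.mp
      (posDef_sum_conjTranspose_mul_self R).isStrictlyPositive
  refine ⟨
    { toFun σ := ⟨c * R σ * ↑c⁻¹, mem_unitaryGroup_iff'.mpr ?_⟩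
      map_one' := Subtype.ext <| by simp
      map_mul' σ τ := Subtype.ext <| by simp [mul_assoc] },
    fun σ => trace_units_conj c (R σ)⟩
  calc star (c * R σ * ↑c⁻¹) * (c * R σ * ↑c⁻¹)
      = star (↑c⁻¹ : Matrix ι ι 𝕜) * (star (R σ) * (star ↑c * ↑c) * R σ) * ↑c⁻¹ := by
        simp only [star_mul]; noncomm_ring
    _ = star (c * ↑c⁻¹ : Matrix ι ι 𝕜) * (c * ↑c⁻¹) := by
        rw [← hcS, hS_inv, hcS, star_mul]; noncomm_ring
    _ = 1 := by simp

theorem Representation.exists_unitary_trace_eq {V : Type*} [AddCommGroup V] [Module 𝕜 V]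
    [FiniteDimensional 𝕜 V] (ρ : Representation 𝕜 G V) :
    ∃ U : G →* unitaryGroup (Fin (Module.finrank 𝕜 V)) 𝕜,
      ∀ σ, trace (U σ : Matrix (Fin (Module.finrank 𝕜 V)) _ 𝕜) = LinearMap.trace 𝕜 V (ρ σ) := by
  let b := Module.finBasis 𝕜 V
  obtain ⟨U, hU⟩ :=
    Matrix.exists_unitary_trace_eq ((LinearMap.toMatrixAlgEquiv b).toMonoidHom.comp ρ)
  exact ⟨U, fun σ => by rw [hU, LinearMap.trace_eq_matrix_trace 𝕜 b]; rfl⟩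

end UnitaryRepresentation

section Permutation

@[simps]
def Equiv.Perm.arrowCongrHom (α β : Type*) : Equiv.Perm α →* Equiv.Perm (α → β) where
  toFun σ := σ.arrowCongr (Equiv.refl β)
  map_one' := rfl
  map_mul' _ _ := rfl

variable (X R : Type*) [Fintype X] [DecidableEq X] [CommRing R] [StarRing R]

def Matrix.permUnitaryHom : Equiv.Perm X →* unitaryGroup X R :=
  permMatrixHom.codRestrict _ fun σ => mem_unitaryGroup_iff'.mpr <| by
    simp [star_eq_conjTranspose, ← permMatrix_mul]

variable {X R} in
theorem Matrix.permUnitaryHom_mulVec (σ : Equiv.Perm X) (v : X → R) :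
    (permUnitaryHom X R σ : Matrix X X R) *ᵥ v = v ∘ ⇑σ⁻¹ :=
  permMatrix_mulVec _

end Permutation

theorem Matrix.prod_mul_conjTranspose_apply_perm {n R : Type*} [Fintype n] [DecidableEq n]
    [CommSemiring R] [StarRing R] (C : Matrix n n R) (σ : Equiv.Perm n) :
    ∏ t, (C * Cᴴ) t (σ t) = ∑ g : n → n, star (∏ t, C t (g t)) * ∏ t, C t (g (σ t)) := by
  simp only [mul_apply, conjTranspose_apply, Finset.prod_univ_sum, Fintype.piFinset_univ]
  refine Fintype.sum_equiv (σ.arrowCongr (Equiv.refl n)) _ _ fun h => ?_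
  have hσ : ∏ t, C t (h (σ.symm t)) = ∏ t, C (σ t) (h t) := by
    simpa using (Equiv.prod_comp σ fun t => C t (h (σ.symm t))).symm
  simp [hσ, star_prod, Finset.prod_mul_distrib, mul_comm]

theorem gmf_nonneg_general (n : ℕ) (H : Subgroup (Equiv.Perm (Fin n)))
    [Fintype H] (V : FDRep ℂ H)
    (A : Matrix (Fin n) (Fin n) ℂ) (hA : A.PosSemidef) :
    0 ≤ ∑ σ : H, V.character σ * ∏ t, A t ((σ : Equiv.Perm (Fin n)) t) := by
  open scoped MatrixOrder Matrix.Norms.L2Operator in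
  obtain ⟨C, rfl⟩ := CStarAlgebra.nonneg_iff_eq_mul_star_self.mp hA.nonneg
  obtain ⟨U, hU⟩ := Representation.exists_unitary_trace_eq V.ρ
  let W := (permUnitaryHom (Fin n → Fin n) ℂ).comp
    ((Equiv.Perm.arrowCongrHom (Fin n) (Fin n)).comp H.subtype)
  let y : (Fin n → Fin n) → ℂ := fun g => ∏ t, C t (g t)
  refine ((posSemidef_sum_trace_smul_unitary U W).dotProduct_mulVec_nonneg y).trans_eq ?_
  rw [sum_mulVec, dotProduct_sum]
  refine Fintype.sum_congr _ _ fun σ => ?_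
  rw [smul_mulVec, dotProduct_smul, smul_eq_mul, hU, star_eq_conjTranspose,
    prod_mul_conjTranspose_apply_perm]
  congr 1
  simp [W, y, dotProduct, permUnitaryHom_mulVec]

/-- For a subgroup `H` of `S_n` and an irreducible character `χ` of `H`,
the generalized matrix function `d^H_χ(A) = ∑_{σ ∈ H} χ(σ) ∏_t A_{t, σ(t)}`
of a positive semidefinite matrix `A` is a nonnegative real number. -/
theorem gmf_nonneg (n : ℕ) (H : Subgroup (Equiv.Perm (Fin n)))
    [Fintype H] (V : FDRep ℂ H) [Simple V]
    (A : Matrix (Fin n) (Fin n) ℂ) (hA : A.PosSemidef) :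
    0 ≤ ∑ σ : H, V.character σ * ∏ t, A t ((σ : Equiv.Perm (Fin n)) t) :=
  gmf_nonneg_general n H V A hA
end

section
/- For every positive semidefinite n×n complex matrix A, the permanent per(A) = Σ_{σ∈S_n} ∏_t A_{t,σ(t)} is a nonnegative real number. -/
open scoped ComplexOrder

/-!
Write `A = Bᴴ * B`. The `n`-fold Kronecker power of `A`, indexed by maps `n → n`, is then
`Cᴴ * C` for `C` the Kronecker power of `B`, hence positive semidefinite, and so is its
restriction to the permutations. The sum of all entries of that restriction is
`n! • per A`, and the sum of the entries of a positive semidefinite matrix is `1ᴴ M 1 ≥ 0`.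
-/

namespace Matrix

variable {𝕜 l m n : Type*}

def kroneckerPow [CommMonoid 𝕜] (A : Matrix m n 𝕜) (κ : Type*) [Fintype κ] :
    Matrix (κ → m) (κ → n) 𝕜 :=
  of fun f g ↦ ∏ k, A (f k) (g k)

variable {κ : Type*} [Fintype κ]

theorem conjTranspose_kroneckerPow [CommMonoid 𝕜] [StarMul 𝕜] (A : Matrix m n 𝕜) :
    Aᴴ.kroneckerPow κ = (A.kroneckerPow κ)ᴴ := by
  ext f g
  simp [kroneckerPow, star_prod]

theorem mul_kroneckerPow [DecidableEq κ] [Fintype m] [CommSemiring 𝕜] (A : Matrix l m 𝕜)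
    (B : Matrix m n 𝕜) : (A * B).kroneckerPow κ = A.kroneckerPow κ * B.kroneckerPow κ := by
  ext f g
  simp only [kroneckerPow, mul_apply, of_apply, ← Finset.prod_mul_distrib]
  exact Finset.prod_univ_sum _ _

theorem PosSemidef.kroneckerPow [Fintype n] [RCLike 𝕜] {A : Matrix n n 𝕜}
    (hA : A.PosSemidef) : (A.kroneckerPow κ).PosSemidef := by
  classical
  open scoped MatrixOrder in
  obtain ⟨B, rfl⟩ := CStarAlgebra.nonneg_iff_eq_star_mul_self.mp hA.nonneg
  rw [star_eq_conjTranspose, mul_kroneckerPow, conjTranspose_kroneckerPow]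
  exact posSemidef_conjTranspose_mul_self _

theorem PosSemidef.sum_apply_nonneg {R : Type*} [Fintype n] [CommRing R] [PartialOrder R]
    [StarRing R] {M : Matrix n n R} (hM : M.PosSemidef) : 0 ≤ ∑ i, ∑ j, M i j := by
  simpa [dotProduct, mulVec] using hM.dotProduct_mulVec_nonneg 1

theorem sum_perm_kroneckerPow_apply [Fintype n] [DecidableEq n] [CommSemiring 𝕜]
    (A : Matrix n n 𝕜) :
    ∑ σ : Equiv.Perm n, ∑ τ : Equiv.Perm n, A.kroneckerPow n σ τ
      = Fintype.card (Equiv.Perm n) • A.permanent := by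
  rw [Finset.sum_comm, ← Finset.card_univ, ← Finset.sum_const]
  exact Finset.sum_congr rfl fun τ _ ↦ permanent_permute_rows τ A

theorem PosSemidef.permanent_nonneg [Fintype n] [DecidableEq n] [RCLike 𝕜] {A : Matrix n n 𝕜}
    (hA : A.PosSemidef) : 0 ≤ A.permanent := by
  have h := ((hA.kroneckerPow (κ := n)).submatrix ((⇑) : Equiv.Perm n → n → n)).sum_apply_nonneg
  simp only [submatrix_apply, sum_perm_kroneckerPow_apply, nsmul_eq_mul] at h
  exact le_of_mul_le_mul_left (by rwa [mul_zero]) (Nat.cast_pos.2 Fintype.card_pos)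

end Matrix

/-- The permanent of a positive semidefinite complex matrix is a nonnegative
real number. -/
theorem permanent_nonneg (n : ℕ) (A : Matrix (Fin n) (Fin n) ℂ)
    (hA : A.PosSemidef) :
    0 ≤ ∑ σ : Equiv.Perm (Fin n), ∏ t, A t (σ t) := by
  simpa [Matrix.permanent] using hA.transpose.permanent_nonneg
end

section
/- Marcus's inequality: for every positive semidefinite n×n complex matrix A, the permanent satisfies per(A) ≥ ∏_{i=1}^n A_{ii}. -/
/-!
Write `A = Bᴴ * B`, so that `A` is the Gram matrix of the columns of `B`. Expanding the permanent
along the first row and the first column gives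
`per A = A₀₀ · per A(0|0) + ∑ r q, conj (A₀ᵣ) · A₀_q · per A(0,r|0,q)`,
and each minor `A(0,r|0,q)` is again a product `Xᵣᴴ * X_q` of column-submatrices of `B`.
The kernel `(X, Y) ↦ per (Xᴴ * Y)` is positive semidefinite: in coordinates it is the inner product
of the tensor `⊗ X` with the symmetrisation of `⊗ Y`, and symmetrisation is, up to the factor
`(card κ)!`, an orthogonal projection. Hence the cross term is nonnegative, and induction applied to
`A(0|0)` gives `∏ Aᵢᵢ ≤ per A`.
-/

open scoped ComplexOrder
open Finset Equiv

namespace Matrix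

section Expansion

variable {R : Type*} [CommSemiring R] {n : ℕ}

theorem permanent_submatrix_swap_zero_succ (A : Matrix (Fin (n + 1)) (Fin (n + 1)) R)
    (p : Fin (n + 1)) :
    (A.submatrix (fun j ↦ Equiv.swap 0 p j.succ) Fin.succ).permanent =
      (A.submatrix p.succAbove Fin.succ).permanent := by
  cases p using Fin.cases with
  | zero => simp
  | succ i =>
    rw [← permanent_permute_cols i.cycleRange (A.submatrix i.succ.succAbove Fin.succ)]
    simp only [submatrix_submatrix, Function.comp_def, Fin.succAbove_cycleRange, id]

theorem permanent_succ_column_zero (A : Matrix (Fin (n + 1)) (Fin (n + 1)) R) :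
    A.permanent = ∑ i, A i 0 * (A.submatrix i.succAbove Fin.succ).permanent := by
  simp_rw [← permanent_submatrix_swap_zero_succ, permanent, mul_sum]
  rw [← Perm.decomposeFin.symm.sum_comp, Fintype.sum_prod_type]
  simp [Fin.prod_univ_succ]

theorem permanent_succ_row_zero (A : Matrix (Fin (n + 1)) (Fin (n + 1)) R) :
    A.permanent = ∑ j, A 0 j * (A.submatrix Fin.succ j.succAbove).permanent := by
  rw [← permanent_transpose, permanent_succ_column_zero]
  simp [← transpose_submatrix]

theorem permanent_succ_succ_row_column_zero (A : Matrix (Fin (n + 2)) (Fin (n + 2)) R) :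
    A.permanent = A 0 0 * (A.submatrix Fin.succ Fin.succ).permanent +
      ∑ r : Fin (n + 1), ∑ q : Fin (n + 1), A r.succ 0 * A 0 q.succ *
        (A.submatrix (Fin.succ ∘ r.succAbove) (Fin.succ ∘ q.succAbove)).permanent := by
  rw [permanent_succ_row_zero, Fin.sum_univ_succ, Fin.succAbove_zero, sum_comm]
  congr 1
  refine sum_congr rfl fun q _ ↦ ?_
  rw [permanent_succ_column_zero, mul_sum]
  refine sum_congr rfl fun r _ ↦ ?_
  simp only [submatrix_apply, Fin.succ_succAbove_zero, submatrix_submatrix]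
  rw [show q.succ.succAbove ∘ Fin.succ = Fin.succ ∘ q.succAbove from
    funext (Fin.succ_succAbove_succ q)]
  ring

end Expansion

theorem submatrix_conjTranspose_mul_self {R ι κ μ ν : Type*} [NonUnitalNonAssocSemiring R] [Star R]
    [Fintype ι] (B : Matrix ι κ R) (f : μ → κ) (g : ν → κ) :
    (Bᴴ * B).submatrix f g = (B.submatrix id f)ᴴ * B.submatrix id g := by
  rw [conjTranspose_submatrix, submatrix_mul _ _ _ id _ Function.bijective_id]

section Gram

variable {𝕜 ι κ : Type*} [RCLike 𝕜] [Fintype ι] [Fintype κ] [DecidableEq κ]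

theorem sum_precomp_perm {M : Type*} [AddCommMonoid M] (τ : Perm κ) (F : (κ → ι) → M) :
    ∑ f, F (f ∘ τ) = ∑ f, F f :=
  (τ.symm.arrowCongr (Equiv.refl ι)).sum_comp F

theorem sum_perm_sum_star_mul_comp_nonneg (d : (κ → ι) → 𝕜) :
    0 ≤ ∑ σ : Perm κ, ∑ f, star (d f) * d (f ∘ σ) := by
  set S := ∑ σ : Perm κ, ∑ f, star (d f) * d (f ∘ σ)
  have h_symmetrize : ∑ f, star (∑ τ : Perm κ, d (f ∘ τ)) * ∑ τ : Perm κ, d (f ∘ τ) =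
      (Fintype.card (Perm κ) : 𝕜) * S := by
    calc _ = ∑ τ : Perm κ, ∑ σ : Perm κ, ∑ f, star (d (f ∘ τ)) * d (f ∘ τ ∘ σ) := by
          simp_rw [star_sum, sum_mul_sum]
          rw [sum_comm]
          refine sum_congr rfl fun τ _ ↦ ?_
          rw [sum_comm, ← Equiv.sum_comp (Equiv.mulLeft τ)]
          rfl
      _ = ∑ _τ : Perm κ, S :=
          sum_congr rfl fun τ _ ↦ sum_congr rfl fun σ _ ↦
            sum_precomp_perm τ fun g ↦ star (d g) * d (g ∘ σ)
      _ = _ := by simp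
  have h_card : (0 : 𝕜) < Fintype.card (Perm κ) := Nat.cast_pos.mpr Fintype.card_pos
  refine le_of_mul_le_mul_left ?_ h_card
  rw [mul_zero, ← h_symmetrize]
  exact sum_nonneg fun f _ ↦ star_mul_self_nonneg _

theorem permanent_conjTranspose_mul (X Y : Matrix ι κ 𝕜) :
    (Xᴴ * Y).permanent =
      ∑ σ : Perm κ, ∑ f : κ → ι, star (∏ i, X (f i) i) * ∏ i, Y (f (σ i)) i := by
  classical
  refine sum_congr rfl fun σ _ ↦ ?_
  simp only [mul_apply, conjTranspose_apply, Fintype.prod_sum]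
  rw [← sum_precomp_perm σ]
  refine sum_congr rfl fun f _ ↦ ?_
  rw [prod_mul_distrib, star_prod]
  congr 1
  exact Equiv.prod_comp σ fun j ↦ star (X (f j) j)

theorem sum_star_mul_mul_permanent_conjTranspose_mul_nonneg {ν : Type*} [Fintype ν]
    (z : ν → 𝕜) (X : ν → Matrix ι κ 𝕜) :
    0 ≤ ∑ a, ∑ b, star (z a) * z b * ((X a)ᴴ * X b).permanent := by
  classical
  convert sum_perm_sum_star_mul_comp_nonneg (fun f ↦ ∑ a, z a * ∏ i, X a (f i) i) using 1
  simp only [star_sum, sum_mul_sum]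
  simp only [permanent_conjTranspose_mul, mul_sum]
  simp_rw [sum_comm (s := (univ : Finset ν)) (t := (univ : Finset (Perm κ))),
    sum_comm (s := (univ : Finset ν)) (t := (univ : Finset (κ → ι)))]
  simp only [star_mul', Function.comp_apply, mul_mul_mul_comm]

theorem prod_diag_le_permanent_conjTranspose_mul :
    ∀ {n : ℕ} (B : Matrix ι (Fin n) 𝕜), ∏ i, (Bᴴ * B) i i ≤ (Bᴴ * B).permanent
  | 0, _ => by simp [permanent_isEmpty]
  | 1, B => by simp [permanent_unique]
  | n + 2, B => by
    set G := Bᴴ * B with hG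
    have hG_herm : G.IsHermitian := isHermitian_conjTranspose_mul_self B
    have h_corner : 0 ≤ G 0 0 := (posSemidef_conjTranspose_mul_self B).diag_nonneg
    have h_minor := prod_diag_le_permanent_conjTranspose_mul (B.submatrix id Fin.succ)
    rw [← submatrix_conjTranspose_mul_self, ← hG] at h_minor
    have h_cross := sum_star_mul_mul_permanent_conjTranspose_mul_nonneg (fun q ↦ G 0 q.succ)
      fun q : Fin (n + 1) ↦ B.submatrix id (Fin.succ ∘ q.succAbove)
    simp only [← submatrix_conjTranspose_mul_self, ← hG, hG_herm.apply] at h_cross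
    rw [permanent_succ_succ_row_column_zero, Fin.prod_univ_succ]
    calc G 0 0 * ∏ i : Fin (n + 1), G i.succ i.succ
        ≤ G 0 0 * (G.submatrix Fin.succ Fin.succ).permanent := by gcongr; exact h_minor
      _ ≤ _ := le_add_of_nonneg_right h_cross

end Gram

end Matrix

open Matrix

/-- Marcus's inequality: for a positive semidefinite matrix the permanent
dominates the product of the diagonal entries. -/
theorem marcus_inequality (n : ℕ) (A : Matrix (Fin n) (Fin n) ℂ)
    (hA : A.PosSemidef) :
    ∏ i, A i i ≤ ∑ σ : Equiv.Perm (Fin n), ∏ t, A t (σ t) := by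
  obtain ⟨B, rfl⟩ : ∃ B : Matrix (Fin n) (Fin n) ℂ, A = Bᴴ * B := by
    open scoped MatrixOrder in
    exact CStarAlgebra.nonneg_iff_eq_star_mul_self.mp hA.nonneg
  exact (prod_diag_le_permanent_conjTranspose_mul B).trans_eq (permanent_transpose _).symm
end

section
/- Let f : S_n → C be such that d_f(A) := Σ_{σ∈S_n} f(σ) ∏_t A_{t,σ(t)} is a nonnegative real for every positive semidefinite n×n complex matrix A. Then for all positive semidefinite m×m complex matrices X_1,...,X_{n-1} and every w ∈ C^m, the quantity Σ_{σ∈S_n} f(σ) tr(σ^{-1}·(X_1 ⊗ ... ⊗ X_{n-1} ⊗ |w⟩⟨w|)) is a nonnegative real, where σ^{-1} acts on (C^m)^{⊗n} by permuting tensor factors. -/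
/-!
Write each positive semidefinite factor as `Yᵢ = Bᵢᴴ Bᵢ`. Expanding the trace of
`σ⁻¹ · (Y₀ ⊗ ⋯ ⊗ Y_{N-1})` entrywise and summing first over the tensor indices, the trace
becomes a sum, over all choices `c` of one row `c i` of each `Bᵢ`, of `∏ₜ G_{t,σ(t)}`, where
`G` is the Gram matrix of the selected rows. Hence `∑_σ f(σ) tr(…) = ∑_c d_f(G_c)`, a sum of
values of `d_f` at positive semidefinite matrices.
-/

open scoped ComplexOrder
open Matrix

/-- The Kronecker product `X 0 ⊗ ⋯ ⊗ X n` acting on `(ℂ^m)^{⊗ (n+1)}`,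
realized as a matrix indexed by functions. -/
noncomputable def tensorMat {n m : ℕ} (X : Fin n → Matrix (Fin m) (Fin m) ℂ) :
    Matrix (Fin n → Fin m) (Fin n → Fin m) ℂ :=
  Matrix.of fun k l => ∏ i, X i (k i) (l i)

/-- The operator on `(ℂ^m)^{⊗ n}` permuting the tensor factors by `σ`:
on pure tensors, the `i`-th factor of `σ • (w 0 ⊗ ⋯ ⊗ w (n-1))` is `w (σ⁻¹ i)`. -/
noncomputable def permMat {m : ℕ} (n : ℕ) (σ : Equiv.Perm (Fin n)) :
    Matrix (Fin n → Fin m) (Fin n → Fin m) ℂ :=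
  Matrix.of fun k l => if (k = fun i => l (σ⁻¹ i)) then 1 else 0

lemma Matrix.PosSemidef.exists_eq_conjTranspose_mul_self {𝕜 n : Type*} [RCLike 𝕜] [Fintype n]
    [DecidableEq n] {A : Matrix n n 𝕜} (hA : A.PosSemidef) : ∃ B : Matrix n n 𝕜, A = Bᴴ * B := by
  open scoped MatrixOrder Norms.L2Operator in
  exact CStarAlgebra.nonneg_iff_eq_star_mul_self.mp hA.nonneg

lemma trace_permMat_inv_mul_tensorMat {N m : ℕ} (σ : Equiv.Perm (Fin N))
    (Y : Fin N → Matrix (Fin m) (Fin m) ℂ) :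
    (permMat N σ⁻¹ * tensorMat Y).trace = ∑ l : Fin N → Fin m, ∏ i, Y i (l i) (l (σ i)) := by
  classical
  simp only [trace, diag_apply, mul_apply, permMat, tensorMat, of_apply, inv_inv, ite_mul,
    one_mul, zero_mul]
  rw [Finset.sum_comm]
  exact Finset.sum_congr rfl fun l _ => by simp

def selectRows {ι κ μ R : Type*} (B : ι → Matrix κ μ R) (c : ι → κ) : Matrix ι μ R :=
  of fun t => B t (c t)

lemma sum_prod_conjTranspose_mul_self_apply {ι κ μ R : Type*} [Fintype ι] [DecidableEq ι]
    [Fintype κ] [Fintype μ] [CommSemiring R] [StarRing R]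
    (B : ι → Matrix κ μ R) (σ : Equiv.Perm ι) :
    ∑ l : ι → μ, ∏ i, ((B i)ᴴ * B i) (l i) (l (σ i)) =
      ∑ c : ι → κ, ∏ t, (selectRows B c * (selectRows B c)ᴴ) t (σ t) := by
  have hreindex (c : ι → κ) (l : ι → μ) :
      ∏ i, star (B i (c i) (l i)) * B i (c i) (l (σ i)) =
        ∏ i, star (B i (c i) (l i)) * B (σ⁻¹ i) (c (σ⁻¹ i)) (l i) := by
    rw [Finset.prod_mul_distrib, Finset.prod_mul_distrib,
      ← Equiv.prod_comp σ fun i => B (σ⁻¹ i) (c (σ⁻¹ i)) (l i)]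
    simp
  calc ∑ l : ι → μ, ∏ i, ((B i)ᴴ * B i) (l i) (l (σ i))
      = ∑ c : ι → κ, ∑ l : ι → μ, ∏ i, star (B i (c i) (l i)) * B i (c i) (l (σ i)) := by
        simp only [mul_apply, conjTranspose_apply, Fintype.prod_sum]
        exact Finset.sum_comm
    _ = ∑ c : ι → κ, ∏ i, ∑ a, star (B i (c i) a) * B (σ⁻¹ i) (c (σ⁻¹ i)) a := by
        simp only [hreindex, Fintype.prod_sum]
    _ = ∑ c : ι → κ, ∏ t, (selectRows B c * (selectRows B c)ᴴ) t (σ t) := by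
        refine Finset.sum_congr rfl fun c _ => ?_
        rw [← Equiv.prod_comp σ]
        simp [selectRows, mul_apply, mul_comm]

theorem sum_mul_trace_permMat_inv_mul_tensorMat_nonneg {N m : ℕ} (f : Equiv.Perm (Fin N) → ℂ)
    (hf : ∀ A : Matrix (Fin N) (Fin N) ℂ, A.PosSemidef → 0 ≤ ∑ σ, f σ * ∏ t, A t (σ t))
    (Y : Fin N → Matrix (Fin m) (Fin m) ℂ) (hY : ∀ i, (Y i).PosSemidef) :
    0 ≤ ∑ σ, f σ * (permMat N σ⁻¹ * tensorMat Y).trace := by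
  choose B hB using fun i => (hY i).exists_eq_conjTranspose_mul_self
  obtain rfl : Y = fun i => (B i)ᴴ * B i := funext hB
  simp_rw [trace_permMat_inv_mul_tensorMat, sum_prod_conjTranspose_mul_self_apply, Finset.mul_sum]
  rw [Finset.sum_comm]
  exact Finset.sum_nonneg fun c _ => hf _ (posSemidef_self_mul_conjTranspose _)

/-- If `d_f(A) = ∑_σ f(σ) ∏_t A_{t,σ(t)}` is a nonnegative real for every
positive semidefinite `(n+1) × (n+1)` matrix `A`, then for all positive
semidefinite `m × m` matrices `X 0, …, X (n-1)` and every `w ∈ ℂ^m`,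
`∑_σ f(σ) tr(σ⁻¹ · (X 0 ⊗ ⋯ ⊗ X (n-1) ⊗ |w⟩⟨w|))` is a nonnegative real. -/
theorem matrix_gmf_nonneg (n m : ℕ) (f : Equiv.Perm (Fin (n + 1)) → ℂ)
    (hf : ∀ A : Matrix (Fin (n + 1)) (Fin (n + 1)) ℂ, A.PosSemidef →
      0 ≤ ∑ σ : Equiv.Perm (Fin (n + 1)), f σ * ∏ t, A t (σ t))
    (X : Fin n → Matrix (Fin m) (Fin m) ℂ) (hX : ∀ i, (X i).PosSemidef)
    (w : Fin m → ℂ) :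
    0 ≤ ∑ σ : Equiv.Perm (Fin (n + 1)), f σ *
        (permMat (n + 1) σ⁻¹ *
          tensorMat (Fin.snoc X (Matrix.vecMulVec w (star w)))).trace := by
  refine sum_mul_trace_permMat_inv_mul_tensorMat_nonneg f hf _ fun i => ?_
  refine Fin.lastCases ?_ (fun j => ?_) i
  · simpa using posSemidef_vecMulVec_self_star w
  · simpa using hX j
end

section
/- For all positive semidefinite m×m complex matrices X, Y with tr(X) = tr(Y) = 1, the matrix (2/3)[X + Y + tr(XY)·I] − (XY + YX) is positive semidefinite. -/
/-!
For a vector `v` put `a = v*Xv`, `b = v*Yv`, `s = v*v` and `t = tr(XY)`. The quadratic form of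
`XY + YX` at `v` is `2 Re v*XYv`, and Cauchy–Schwarz for the semi-inner product of `Y` gives
`|v*XYv|² ≤ (v*XYXv)(v*Yv) ≤ t a b`, because `XYX = √X (√X Y √X) √X ≤ tr(√X Y √X) X = t X`.
Trace one forces `X, Y ≤ I`, hence `a, b ≤ s` and `t ≤ 1`, and then `3 √(tab) ≤ a + b + ts`.
-/

open scoped ComplexOrder MatrixOrder
open Matrix Unitary

theorem three_mul_le_of_sq_le_mul_mul {a b s t q : ℝ} (ha : 0 ≤ a) (has : a ≤ s) (hb : 0 ≤ b)
    (hbs : b ≤ s) (ht : 0 ≤ t) (ht1 : t ≤ 1) (hq : q ^ 2 ≤ t * a * b) :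
    3 * q ≤ a + b + t * s := by
  have hs : 0 ≤ s := ha.trans has
  -- AM–GM gives `(a + b + ts)² ≥ 9 (a b ts)^(2/3)`, which is `≥ 9 tab` because `tab ≤ s²`.
  have h9 : (3 * q) ^ 2 ≤ (a + b + t * s) ^ 2 := by
    nlinarith [sq_nonneg (a - b), sq_nonneg (a - t * s), sq_nonneg (b - t * s),
      mul_nonneg (mul_nonneg ht ha) (sub_nonneg.2 hbs),
      mul_nonneg (mul_nonneg ht hb) (sub_nonneg.2 has),
      mul_nonneg (mul_nonneg (sub_nonneg.2 ht1) ha) hb, mul_nonneg ht hs]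
  exact (abs_le_of_sq_le_sq' h9 (by positivity)).2

namespace Matrix

variable {n 𝕜 : Type*} [Fintype n] [RCLike 𝕜] {A B : Matrix n n 𝕜}

theorem re_dotProduct_mulVec_le_of_le (h : A ≤ B) (x : n → 𝕜) :
    RCLike.re (star x ⬝ᵥ A *ᵥ x) ≤ RCLike.re (star x ⬝ᵥ B *ᵥ x) := by
  have := (le_iff.mp h).re_dotProduct_nonneg x
  rwa [sub_mulVec, dotProduct_sub, map_sub, sub_nonneg] at this

theorem star_mulVec_dotProduct_mulVec (A B : Matrix n n 𝕜) (x y : n → 𝕜) :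
    star (A *ᵥ x) ⬝ᵥ B *ᵥ y = star x ⬝ᵥ (Aᴴ * B) *ᵥ y := by
  rw [star_mulVec, dotProduct_mulVec, vecMul_vecMul, ← dotProduct_mulVec]

theorem IsHermitian.re_dotProduct_mul_mulVec_comm (hA : A.IsHermitian) (hB : B.IsHermitian)
    (x : n → 𝕜) :
    RCLike.re (star x ⬝ᵥ (B * A) *ᵥ x) = RCLike.re (star x ⬝ᵥ (A * B) *ᵥ x) := by
  rw [star_dotProduct, star_mulVec, ← dotProduct_mulVec, conjTranspose_mul, hA.eq, hB.eq,
    RCLike.star_def, RCLike.conj_re]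

theorem IsHermitian.posSemidef_of_re_dotProduct_mulVec_nonneg (hA : A.IsHermitian)
    (h : ∀ x, 0 ≤ RCLike.re (star x ⬝ᵥ A *ᵥ x)) : A.PosSemidef := by
  refine PosSemidef.of_dotProduct_mulVec_nonneg hA fun x => ?_
  rw [RCLike.nonneg_iff]
  exact ⟨h x, hA.im_star_dotProduct_mulVec_self x⟩

namespace PosSemidef

theorem le_trace_smul_one [DecidableEq n] (hA : A.PosSemidef) : A ≤ A.trace • 1 := by
  have hdiff : A.trace • 1 - A = conjStarAlgAut 𝕜 _ hA.1.eigenvectorUnitary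
      (A.trace • 1 - diagonal (RCLike.ofReal ∘ hA.1.eigenvalues)) := by
    rw [map_sub, map_smul, map_one, ← hA.1.spectral_theorem]
  rw [le_iff, hdiff, conjStarAlgAut_apply, isUnit_coe.posSemidef_star_right_conjugate_iff,
    smul_one_eq_diagonal, diagonal_sub, posSemidef_diagonal_iff]
  intro i
  rw [hA.1.trace_eq_sum_eigenvalues]
  simp only [Function.comp_apply]
  rw [← RCLike.ofReal_sum, ← RCLike.ofReal_sub, RCLike.ofReal_nonneg, sub_nonneg]
  exact Finset.single_le_sum (fun j _ => hA.eigenvalues_nonneg j) (Finset.mem_univ i)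

theorem trace_mul_nonneg (hA : A.PosSemidef) (hB : B.PosSemidef) : 0 ≤ (A * B).trace := by
  classical
  obtain ⟨S, hS, rfl⟩ : ∃ S, 0 ≤ S ∧ S * S = A :=
    ⟨CFC.sqrt A, CFC.sqrt_nonneg A, CFC.sqrt_mul_sqrt_self A hA.nonneg⟩
  rw [Matrix.mul_assoc, trace_mul_comm S]
  exact (conjugate_nonneg_of_nonneg hB.nonneg hS).posSemidef.trace_nonneg

theorem trace_mul_le_trace_mul_trace (hA : A.PosSemidef) (hB : B.PosSemidef) :
    (A * B).trace ≤ A.trace * B.trace := by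
  classical
  have h := hA.trace_mul_nonneg hB.le_trace_smul_one
  rwa [Matrix.mul_sub, trace_sub, Matrix.mul_smul, Matrix.mul_one, trace_smul, smul_eq_mul,
    mul_comm, sub_nonneg] at h

theorem mul_mul_le_trace_mul_smul [DecidableEq n] (hA : A.PosSemidef) (hB : B.PosSemidef) :
    A * B * A ≤ (A * B).trace • A := by
  obtain ⟨S, hS, rfl⟩ : ∃ S, 0 ≤ S ∧ S * S = A :=
    ⟨CFC.sqrt A, CFC.sqrt_nonneg A, CFC.sqrt_mul_sqrt_self A hA.nonneg⟩
  have hSBS : S * B * S ≤ (S * S * B).trace • 1 := by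
    rw [Matrix.mul_assoc S S B, trace_mul_comm S]
    exact (conjugate_nonneg_of_nonneg hB.nonneg hS).posSemidef.le_trace_smul_one
  simpa only [Matrix.mul_smul, Matrix.smul_mul, Matrix.mul_one, Matrix.mul_assoc] using
    conjugate_le_conjugate_of_nonneg hSBS hS

theorem norm_dotProduct_mulVec_sq_le (hA : A.PosSemidef) (x y : n → 𝕜) :
    ‖star x ⬝ᵥ A *ᵥ y‖ ^ 2 ≤
      RCLike.re (star x ⬝ᵥ A *ᵥ x) * RCLike.re (star y ⬝ᵥ A *ᵥ y) := by
  let _ := A.toSeminormedAddCommGroup hA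
  let _ := A.toInnerProductSpace hA
  have hinner : ∀ u v : n → 𝕜, inner 𝕜 u v = star u ⬝ᵥ A *ᵥ v := fun u v => dotProduct_comm _ _
  have h := inner_mul_inner_self_le (𝕜 := 𝕜) x y
  rwa [norm_inner_symm y x, ← sq, hinner, hinner, hinner] at h

variable [DecidableEq n] {X Y : Matrix n n 𝕜}

theorem norm_dotProduct_mul_mulVec_sq_le (hX : X.PosSemidef) (hY : Y.PosSemidef)
    (x : n → 𝕜) : ‖star x ⬝ᵥ (X * Y) *ᵥ x‖ ^ 2 ≤
      RCLike.re (X * Y).trace * RCLike.re (star x ⬝ᵥ X *ᵥ x) * RCLike.re (star x ⬝ᵥ Y *ᵥ x) := by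
  have hcs := hY.norm_dotProduct_mulVec_sq_le (X *ᵥ x) x
  rw [star_mulVec_dotProduct_mulVec, star_mulVec_dotProduct_mulVec, hX.1.eq, mulVec_mulVec] at hcs
  refine hcs.trans (mul_le_mul_of_nonneg_right ?_ (hY.re_dotProduct_nonneg x))
  have := re_dotProduct_mulVec_le_of_le (hX.mul_mul_le_trace_mul_smul hY) x
  rwa [smul_mulVec, dotProduct_smul, smul_eq_mul, RCLike.mul_re,
    hX.1.im_star_dotProduct_mulVec_self, mul_zero, sub_zero] at this

theorem three_mul_re_dotProduct_mul_add_mul_mulVec_le (hX : X.PosSemidef) (hY : Y.PosSemidef)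
    (htX : X.trace = 1) (htY : Y.trace = 1) (x : n → 𝕜) :
    3 * RCLike.re (star x ⬝ᵥ (X * Y + Y * X) *ᵥ x) ≤
      2 * RCLike.re (star x ⬝ᵥ (X + Y + (X * Y).trace • 1) *ᵥ x) := by
  have hle_one : ∀ {A : Matrix n n 𝕜}, A.PosSemidef → A.trace = 1 →
      RCLike.re (star x ⬝ᵥ A *ᵥ x) ≤ RCLike.re (star x ⬝ᵥ x) := fun hA htA => by
    simpa [htA] using re_dotProduct_mulVec_le_of_le hA.le_trace_smul_one x
  have ht0 := RCLike.nonneg_iff.mp (hX.trace_mul_nonneg hY)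
  have ht1 : (X * Y).trace ≤ 1 := by
    simpa [htX, htY] using hX.trace_mul_le_trace_mul_trace hY
  have hre_sq : RCLike.re (star x ⬝ᵥ (X * Y) *ᵥ x) ^ 2 ≤ ‖star x ⬝ᵥ (X * Y) *ᵥ x‖ ^ 2 :=
    sq_le_sq' (neg_le_of_abs_le (RCLike.abs_re_le_norm _)) (RCLike.re_le_norm _)
  have := three_mul_le_of_sq_le_mul_mul (hX.re_dotProduct_nonneg x) (hle_one hX htX)
    (hY.re_dotProduct_nonneg x) (hle_one hY htY) ht0.1 (by simpa using RCLike.re_le_re ht1)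
    (hre_sq.trans (hX.norm_dotProduct_mul_mulVec_sq_le hY x))
  rw [add_mulVec, dotProduct_add, map_add, hX.1.re_dotProduct_mul_mulVec_comm hY.1, add_mulVec,
    add_mulVec, smul_mulVec, one_mulVec, dotProduct_add, dotProduct_add, dotProduct_smul,
    smul_eq_mul, map_add, map_add, RCLike.mul_re, ht0.2, zero_mul, sub_zero]
  linarith

end PosSemidef

end Matrix

/-- For PSD matrices `X, Y` of trace one:
`(2/3)[X + Y + tr(XY)·I] − (XY + YX) ≥ 0` in the Löwner order. -/
theorem loewner_upper_anticommutator (m : ℕ) (X Y : Matrix (Fin m) (Fin m) ℂ)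
    (hX : X.PosSemidef) (hY : Y.PosSemidef)
    (htX : X.trace = 1) (htY : Y.trace = 1) :
    (((2 : ℂ)/3) • (X + Y + (X * Y).trace • (1 : Matrix (Fin m) (Fin m) ℂ))
      - (X * Y + Y * X)).PosSemidef := by
  refine IsHermitian.posSemidef_of_re_dotProduct_mulVec_nonneg ?_ fun v => ?_
  · have hanti : (X * Y + Y * X).IsHermitian := by
      rw [IsHermitian, conjTranspose_add, conjTranspose_mul, conjTranspose_mul, hX.1.eq, hY.1.eq,
        add_comm]
    have h23 : IsSelfAdjoint ((2 : ℂ) / 3) := by simp [IsSelfAdjoint]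
    exact (((hX.1.add hY.1).add (isHermitian_one.smul
      (IsSelfAdjoint.of_nonneg (hX.trace_mul_nonneg hY)))).smul h23).sub hanti
  · have := hX.three_mul_re_dotProduct_mul_add_mul_mulVec_le hY htX htY v
    rw [sub_mulVec, smul_mulVec, dotProduct_sub, dotProduct_smul, map_sub, smul_eq_mul]
    simp only [RCLike.re_to_complex] at this ⊢
    norm_num [Complex.mul_re]
    linarith
end

section
/- For all positive semidefinite m×m complex matrices X, Y with tr(X) = tr(Y) = 1, the matrix XY + YX − X − Y − (tr(XY) − 1)·I is positive semidefinite. -/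
/-!
Fix a unit vector `x` and let `P = 1 - x x⋆` be the projection onto `xᗮ`. The compressions
`PXP` and `PYP` are positive semidefinite, with traces `1 - x⋆Xx` and `1 - x⋆Yx`, and
`tr (PXP · PYP) = tr (XY) - x⋆(XY + YX)x + (x⋆Xx)(x⋆Yx)`. Since `B ≤ tr B • 1` for positive
semidefinite `B`, we have `tr (AB) ≤ tr A · tr B` for positive semidefinite `A`, `B`; applied to
the two compressions, this inequality is exactly `x⋆(XY + YX - X - Y - (tr (XY) - 1) • 1)x ≥ 0`.
-/

open scoped ComplexOrder
open Matrix

namespace Matrix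

variable {n : Type*} [Fintype n]

section RCLike

variable {𝕜 : Type*} [RCLike 𝕜]

open scoped MatrixOrder in
theorem PosSemidef.trace_mul_nonneg_s11 {A B : Matrix n n 𝕜} (hA : A.PosSemidef)
    (hB : B.PosSemidef) : 0 ≤ (A * B).trace := by
  classical
  obtain ⟨C, rfl⟩ := CStarAlgebra.nonneg_iff_eq_star_mul_self.mp hA.nonneg
  rw [star_eq_conjTranspose, mul_assoc, trace_mul_comm]
  exact (hB.mul_mul_conjTranspose_same C).trace_nonneg

theorem PosSemidef.posSemidef_trace_smul_one_sub [DecidableEq n] {B : Matrix n n 𝕜}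
    (hB : B.PosSemidef) : (B.trace • (1 : Matrix n n 𝕜) - B).PosSemidef := by
  set U := hB.1.eigenvectorUnitary
  have hdiag : B.trace • (1 : Matrix n n 𝕜) - B =
      Unitary.conjStarAlgAut 𝕜 _ U (diagonal fun i ↦ B.trace - hB.1.eigenvalues i) := by
    conv_lhs => rw [← map_one (Unitary.conjStarAlgAut 𝕜 _ U), ← map_smul]
    conv_lhs => enter [2]; rw [hB.1.spectral_theorem]
    rw [← map_sub, smul_one_eq_diagonal, diagonal_sub]
    rfl
  rw [hdiag, Unitary.conjStarAlgAut_apply,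
    Unitary.isUnit_coe.posSemidef_star_right_conjugate_iff, posSemidef_diagonal_iff]
  intro i
  rw [hB.1.trace_eq_sum_eigenvalues, ← Finset.sum_erase_add _ _ (Finset.mem_univ i),
    add_sub_cancel_right, ← RCLike.ofReal_sum, RCLike.ofReal_nonneg]
  exact Finset.sum_nonneg fun j _ ↦ hB.eigenvalues_nonneg j

theorem PosSemidef.trace_mul_le_trace_mul_trace_s11 {A B : Matrix n n 𝕜} (hA : A.PosSemidef)
    (hB : B.PosSemidef) : (A * B).trace ≤ A.trace * B.trace := by
  classical
  have h := hA.trace_mul_nonneg_s11 hB.posSemidef_trace_smul_one_sub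
  rwa [mul_sub, trace_sub, Matrix.mul_smul, mul_one, trace_smul, smul_eq_mul, sub_nonneg,
    mul_comm] at h

end RCLike

section CommRing

variable {R : Type*} [CommRing R]

theorem trace_compress_of_mul_self_eq_smul {P : Matrix n n R} {c : R} (hP : P * P = c • P)
    (M : Matrix n n R) : (P * M * P).trace = c * (P * M).trace := by
  rw [trace_mul_cycle, hP, smul_mul, trace_smul, smul_eq_mul]

theorem trace_compress_mul_compress_of_mul_self_eq_smul {P : Matrix n n R} {c : R}
    (hP : P * P = c • P) (M N : Matrix n n R) :
    (P * M * P * (P * N * P)).trace = c ^ 2 * (P * M * P * N).trace := by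
  have h : (P * M * P * (P * N * P)).trace = (P * P * M * (P * P) * N).trace := by
    rw [show P * M * P * (P * N * P) = P * M * (P * P) * N * P by noncomm_ring, trace_mul_comm]
    noncomm_ring
  simp only [h, hP, smul_mul, Matrix.mul_smul, trace_smul, smul_smul, smul_eq_mul, sq]

variable [StarRing R]

theorem IsHermitian.star_trace_mul {A B : Matrix n n R} (hA : A.IsHermitian)
    (hB : B.IsHermitian) : star (A * B).trace = (A * B).trace := by
  rw [← trace_conjTranspose, conjTranspose_mul, hA.eq, hB.eq, trace_mul_comm]

theorem trace_mul_vecMulVec_star (M : Matrix n n R) (x : n → R) :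
    (M * vecMulVec x (star x)).trace = star x ⬝ᵥ M *ᵥ x := by
  rw [mul_vecMulVec, trace_vecMulVec, dotProduct_comm]

theorem vecMulVec_star_mul_mul_vecMulVec_star (M : Matrix n n R) (x : n → R) :
    vecMulVec x (star x) * M * vecMulVec x (star x) =
      (star x ⬝ᵥ M *ᵥ x) • vecMulVec x (star x) := by
  rw [vecMulVec_mul, vecMulVec_mul_vecMulVec, vecMulVec_smul, dotProduct_mulVec]

variable [DecidableEq n]

/-- `x⋆x` times the orthogonal projection onto `xᗮ`; the scaling avoids normalising `x`. -/
def scaledOrthProj (x : n → R) : Matrix n n R :=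
  (star x ⬝ᵥ x) • 1 - vecMulVec x (star x)

theorem isHermitian_scaledOrthProj (x : n → R) : (scaledOrthProj x).IsHermitian := by
  rw [IsHermitian, scaledOrthProj, conjTranspose_sub, conjTranspose_smul, conjTranspose_one,
    conjTranspose_vecMulVec, star_star, ← star_dotProduct]

theorem scaledOrthProj_mul_self (x : n → R) :
    scaledOrthProj x * scaledOrthProj x = (star x ⬝ᵥ x) • scaledOrthProj x := by
  have hQ : vecMulVec x (star x) * vecMulVec x (star x) =
      (star x ⬝ᵥ x) • vecMulVec x (star x) := by
    rw [vecMulVec_mul_vecMulVec, vecMulVec_smul, dotProduct_comm]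
  simp only [scaledOrthProj, sub_mul, mul_sub, smul_mul, Matrix.mul_smul, one_mul, mul_one, hQ,
    smul_sub]
  abel

theorem trace_scaledOrthProj_mul (x : n → R) (M : Matrix n n R) :
    (scaledOrthProj x * M).trace = (star x ⬝ᵥ x) * M.trace - star x ⬝ᵥ M *ᵥ x := by
  rw [scaledOrthProj, sub_mul, trace_sub, smul_mul, one_mul, trace_smul, smul_eq_mul,
    trace_mul_comm, trace_mul_vecMulVec_star]

theorem trace_scaledOrthProj_mul_mul_scaledOrthProj_mul (x : n → R) (M N : Matrix n n R) :
    (scaledOrthProj x * M * scaledOrthProj x * N).trace =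
      (star x ⬝ᵥ x) ^ 2 * (M * N).trace - (star x ⬝ᵥ x) * (star x ⬝ᵥ (M * N) *ᵥ x)
        - (star x ⬝ᵥ x) * (star x ⬝ᵥ (N * M) *ᵥ x)
        + (star x ⬝ᵥ M *ᵥ x) * (star x ⬝ᵥ N *ᵥ x) := by
  set Q := vecMulVec x (star x)
  have hexpand : scaledOrthProj x * M * scaledOrthProj x * N =
      (star x ⬝ᵥ x) ^ 2 • (M * N) - (star x ⬝ᵥ x) • (Q * (M * N))
        - (star x ⬝ᵥ x) • (M * (Q * N)) + Q * M * Q * N := by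
    simp only [scaledOrthProj, sub_mul, mul_sub, smul_mul, Matrix.mul_smul, one_mul, mul_one,
      smul_smul, sq]
    noncomm_ring
  have hQMQ : Q * M * Q * N = (star x ⬝ᵥ M *ᵥ x) • (Q * N) := by
    rw [vecMulVec_star_mul_mul_vecMulVec_star, smul_mul]
  have trace_Q_mul (L : Matrix n n R) : (Q * L).trace = star x ⬝ᵥ L *ᵥ x := by
    rw [trace_mul_comm, trace_mul_vecMulVec_star]
  have trace_mul_Q_mul : (M * (Q * N)).trace = star x ⬝ᵥ (N * M) *ᵥ x := by
    rw [trace_mul_comm, mul_assoc, trace_Q_mul]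
  simp only [hexpand, hQMQ, trace_add, trace_sub, trace_smul, smul_eq_mul, trace_Q_mul,
    trace_mul_Q_mul]

end CommRing

end Matrix

/-- For PSD matrices `X, Y` of trace one:
`XY + YX − X − Y − (tr(XY) − 1)·I ≥ 0` in the Löwner order. -/
theorem loewner_lower_anticommutator (m : ℕ) (X Y : Matrix (Fin m) (Fin m) ℂ)
    (hX : X.PosSemidef) (hY : Y.PosSemidef)
    (htX : X.trace = 1) (htY : Y.trace = 1) :
    (X * Y + Y * X - X - Y
      - ((X * Y).trace - 1) • (1 : Matrix (Fin m) (Fin m) ℂ)).PosSemidef := by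
  refine .of_dotProduct_mulVec_nonneg ?_ fun x ↦ ?_
  · simp only [IsHermitian, conjTranspose_sub, conjTranspose_add, conjTranspose_mul,
      conjTranspose_smul, conjTranspose_one, hX.1.eq, hY.1.eq, star_sub, star_one,
      hX.1.star_trace_mul hY.1]
    abel
  rcases eq_or_ne x 0 with rfl | hx
  · simp
  have hs : 0 < star x ⬝ᵥ x := dotProduct_star_self_pos_iff.mpr hx
  have hP := scaledOrthProj_mul_self x
  have key := (hX.conjTranspose_mul_mul_same (scaledOrthProj x)).trace_mul_le_trace_mul_trace_s11
    (hY.conjTranspose_mul_mul_same (scaledOrthProj x))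
  rw [(isHermitian_scaledOrthProj x).eq, trace_compress_mul_compress_of_mul_self_eq_smul hP,
    trace_compress_of_mul_self_eq_smul hP, trace_compress_of_mul_self_eq_smul hP,
    trace_scaledOrthProj_mul_mul_scaledOrthProj_mul, trace_scaledOrthProj_mul,
    trace_scaledOrthProj_mul, htX, htY] at key
  refine le_of_mul_le_mul_left ?_ (pow_pos hs 3)
  simp only [sub_mulVec, add_mulVec, smul_mulVec, one_mulVec, dotProduct_sub, dotProduct_add,
    dotProduct_smul, smul_eq_mul]
  linear_combination key
end

section
/- Let ω = e^{2πi/3}. For all positive semidefinite m×m complex matrices X, Y, Z with tr(X) = tr(Y) = tr(Z) = 1, the matrix I + L + ωM + ω̄M* is positive semidefinite, where L = tr(XY)Z + tr(XZ)Y + tr(YZ)X and M = tr(ZYX)·I + XY + YZ + ZX, and M* is the conjugate transpose of M. -/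
/-!
Let `χ` be the linear character of `A₄` through `A₄ / V₄ ≅ ℤ/3` with `χ (1 2 3) = ω`, and let
`A₄` permute the factors of `(ℂᵐ)^{⊗4}`. The operator `Σ_g χ̄(g) P_g` is `12` times an
orthogonal projection, so its diagonal coefficients at product vectors,
`Σ_g χ̄(g) ∏ᵢ ⟪uᵢ, u_{g i}⟫`, are nonnegative. Write `X, Y, Z` as sums of rank-one positive
matrices and take `u₀ = v` and `u₁, u₂, u₃` among the rank-one pieces: these coefficients add
up to `⟪v, K v⟫`, where `K` is the matrix of the theorem with the normalisation `tr = 1`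
undone, which makes it trilinear in `(X, Y, Z)`. On rank-one inputs the identity is the
expansion of the twelve terms of the sum over `A₄`.
-/

open scoped ComplexOrder ComplexConjugate
open Matrix

theorem sum_star_mul_prod_dotProduct_nonneg {G ι n : Type*} [Group G] [Fintype G]
    [MulAction G ι] [Fintype ι] [DecidableEq ι] [Fintype n] (χ : G →* Circle)
    (u : ι → n → ℂ) :
    0 ≤ ∑ g : G, star (χ g : ℂ) * ∏ i, star (u i) ⬝ᵥ u (g • i) := by
  set F : G → ℂ := fun g => star (χ g : ℂ) * ∏ i, star (u i) ⬝ᵥ u (g • i)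
  -- the coordinates of the vector `Σ_g χ̄(g) ⨂ᵢ u_{g i}`
  set w : (ι → n) → ℂ := fun f => ∑ g : G, star (χ g : ℂ) * ∏ i, u (g • i) (f i)
  have hgram : ∑ f, star (w f) * w f = Fintype.card G * ∑ g, F g := by
    calc ∑ f, star (w f) * w f
        = ∑ s : G, ∑ t : G, (χ s : ℂ) * star (χ t : ℂ) *
            ∏ i, star (u (s • i)) ⬝ᵥ u (t • i) := by
          simp only [w, star_sum, star_mul', star_star, star_prod, Finset.sum_mul_sum]
          rw [Finset.sum_comm]
          refine Finset.sum_congr rfl fun s _ => ?_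
          rw [Finset.sum_comm]
          refine Finset.sum_congr rfl fun t _ => ?_
          simp only [dotProduct, Pi.star_apply, Fintype.prod_sum, Finset.mul_sum]
          refine Finset.sum_congr rfl fun f _ => ?_
          rw [Finset.prod_mul_distrib]
          ring
      _ = ∑ s : G, ∑ t : G, F (t * s⁻¹) := by
          refine Finset.sum_congr rfl fun s _ => Finset.sum_congr rfl fun t _ => ?_
          congr 1
          · simp only [map_mul, map_inv, Circle.coe_mul, Circle.coe_inv_eq_conj, star_mul',
              Complex.star_def, Complex.conj_conj]
            ring
          · exact Fintype.prod_equiv (MulAction.toPerm s) _ _ fun i => by simp [mul_smul]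
      _ = ∑ s : G, ∑ g, F g := by
          congr! 1 with s
          exact Fintype.sum_equiv (Equiv.mulRight s⁻¹) _ _ fun _ => rfl
      _ = Fintype.card G * ∑ g, F g := by simp
  have hcard : (0 : ℂ) < Fintype.card G := by exact_mod_cast Fintype.card_pos
  have hsum : 0 ≤ ∑ f, star (w f) * w f :=
    Finset.sum_nonneg fun f _ => star_mul_self_nonneg (w f)
  rw [hgram] at hsum
  simpa [hcard.ne'] using mul_nonneg (inv_nonneg.mpr hcard.le) hsum

theorem posSemidef_of_forall_dotProduct_mulVec_nonneg {n : Type*} [Fintype n] [DecidableEq n]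
    {M : Matrix n n ℂ} (h : ∀ x, 0 ≤ star x ⬝ᵥ (M *ᵥ x)) : M.PosSemidef := by
  refine .of_dotProduct_mulVec_nonneg ?_ h
  rw [← isSymmetric_toEuclideanLin_iff, LinearMap.isSymmetric_iff_inner_map_self_real]
  intro x
  have hreal := Complex.conj_eq_iff_im.mpr (Complex.nonneg_iff.mp (h x.ofLp)).2.symm
  have hinner : x.ofLp ⬝ᵥ star (M *ᵥ x.ofLp) = conj (star x.ofLp ⬝ᵥ M *ᵥ x.ofLp) := by
    rw [← Complex.star_def, ← star_dotProduct_star, star_star, dotProduct_comm]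
  change conj (x.ofLp ⬝ᵥ star (M *ᵥ x.ofLp)) = x.ofLp ⬝ᵥ star (M *ᵥ x.ofLp)
  rw [hinner, hreal, hreal]

/-- Reading `Fin 4` as the Klein four-group under `^^^`, `σ 0 ^^^ σ 3` labels the pairing
`{σ 0, σ 3} | {σ 1, σ 2}`; `A₄` permutes the three pairings cyclically. -/
def a4ToZMod3 : alternatingGroup (Fin 4) →* Multiplicative (ZMod 3) where
  toFun σ := .ofAdd ((σ • (0 : Fin 4)) ^^^ σ • (3 : Fin 4)).val
  map_one' := rfl
  map_mul' := by decide

noncomputable def a4Char : alternatingGroup (Fin 4) →* Circle :=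
  ZMod.toCircle.toMonoidHom.comp a4ToZMod3

theorem sum_alternatingGroup_fin_four {M : Type*} [AddCommMonoid M]
    (F : (Fin 4 → Fin 4) → M) :
    ∑ g : alternatingGroup (Fin 4), F (g • ·) =
      F ![0, 1, 2, 3] + F ![1, 0, 3, 2] + F ![2, 3, 0, 1] + F ![3, 2, 1, 0]
        + F ![0, 2, 3, 1] + F ![2, 0, 1, 3] + F ![3, 1, 0, 2] + F ![1, 3, 2, 0]
        + F ![0, 3, 1, 2] + F ![1, 2, 0, 3] + F ![2, 1, 3, 0] + F ![3, 0, 2, 1] := by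
  have hinj : Function.Injective fun (g : alternatingGroup (Fin 4)) (i : Fin 4) => g • i :=
    fun g h hgh => Subtype.ext (Equiv.ext (congrFun hgh))
  rw [← Finset.sum_image hinj.injOn]
  rw [show Finset.univ.image (fun (g : alternatingGroup (Fin 4)) (i : Fin 4) => g • i) =
    {![0, 1, 2, 3], ![1, 0, 3, 2], ![2, 3, 0, 1], ![3, 2, 1, 0],
     ![0, 2, 3, 1], ![2, 0, 1, 3], ![3, 1, 0, 2], ![1, 3, 2, 0],
     ![0, 3, 1, 2], ![1, 2, 0, 3], ![2, 1, 3, 0], ![3, 0, 2, 1]} by decide]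
  simp +decide only [Finset.sum_insert, Finset.mem_insert, Finset.mem_singleton,
    Finset.sum_singleton]
  abel

section PartialTrace

variable {n : Type*} [Fintype n] [DecidableEq n]

/-- The partial trace `tr₂₃₄ [(1 ⊗ X ⊗ Y ⊗ Z) Σ_g χ̄(g) P_g]` over `A₄`, with `ω = χ (1 2 3)`. -/
def a4PartialTrace (ω : ℂ) (X Y Z : Matrix n n ℂ) : Matrix n n ℂ :=
  (X.trace * Y.trace * Z.trace) • 1 + (X * Y).trace • Z + (X * Z).trace • Y + (Y * Z).trace • X
    + ω • ((Z * Y * X).trace • 1 + Z.trace • (X * Y) + X.trace • (Y * Z) + Y.trace • (Z * X))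
    + conj ω • ((X * Y * Z).trace • 1 + Z.trace • (Y * X) + X.trace • (Z * Y)
      + Y.trace • (X * Z))

variable (ω : ℂ)

theorem a4PartialTrace_rotate (X Y Z : Matrix n n ℂ) :
    a4PartialTrace ω X Y Z = a4PartialTrace ω Y Z X := by
  simp only [a4PartialTrace, trace_mul_cycle Z Y X, trace_mul_cycle Y Z X,
    trace_mul_comm Y X, trace_mul_comm Z X]
  module

theorem a4PartialTrace_add_left (X X' Y Z : Matrix n n ℂ) :
    a4PartialTrace ω (X + X') Y Z = a4PartialTrace ω X Y Z + a4PartialTrace ω X' Y Z := by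
  simp only [a4PartialTrace, trace_add, Matrix.add_mul, Matrix.mul_add]
  module

theorem a4PartialTrace_sum_left {ι : Type*} (s : Finset ι) (X : ι → Matrix n n ℂ)
    (Y Z : Matrix n n ℂ) :
    a4PartialTrace ω (∑ i ∈ s, X i) Y Z = ∑ i ∈ s, a4PartialTrace ω (X i) Y Z :=
  map_sum (AddMonoidHom.mk' (a4PartialTrace ω · Y Z) (a4PartialTrace_add_left ω · · Y Z)) X s

theorem a4PartialTrace_sum {ι κ ν : Type*} (s : Finset ι) (t : Finset κ) (r : Finset ν)
    (X : ι → Matrix n n ℂ) (Y : κ → Matrix n n ℂ) (Z : ν → Matrix n n ℂ) :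
    a4PartialTrace ω (∑ i ∈ s, X i) (∑ j ∈ t, Y j) (∑ k ∈ r, Z k) =
      ∑ i ∈ s, ∑ j ∈ t, ∑ k ∈ r, a4PartialTrace ω (X i) (Y j) (Z k) := by
  -- each rotation brings the next summed argument into the first slot
  simp_rw [a4PartialTrace_sum_left, a4PartialTrace_rotate ω (X _), a4PartialTrace_sum_left,
    a4PartialTrace_rotate ω (Y _), a4PartialTrace_sum_left]

theorem dotProduct_a4PartialTrace_vecMulVec_mulVec (v a b c : n → ℂ) :
    star v ⬝ᵥ (a4PartialTrace (ZMod.toCircle (1 : ZMod 3))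
      (vecMulVec a (star a)) (vecMulVec b (star b)) (vecMulVec c (star c)) *ᵥ v) =
    ∑ g : alternatingGroup (Fin 4),
      star (a4Char g : ℂ) * ∏ i, star (![v, a, b, c] i) ⬝ᵥ ![v, a, b, c] (g • i) := by
  have htrace (x y : n → ℂ) : trace (vecMulVec x (star y)) = star y ⬝ᵥ x := by
    rw [trace_vecMulVec, dotProduct_comm]
  have hχ2 : star (ZMod.toCircle (2 : ZMod 3) : ℂ) = ZMod.toCircle (1 : ZMod 3) := by
    rw [show (2 : ZMod 3) = -1 from rfl, AddChar.map_neg_eq_inv, Circle.coe_inv_eq_conj,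
      Complex.star_def, Complex.conj_conj]
  refine Eq.trans ?_ (sum_alternatingGroup_fin_four fun p =>
    star (ZMod.toCircle ((p 0 ^^^ p 3).val : ZMod 3) : ℂ) *
      ∏ i, star (![v, a, b, c] i) ⬝ᵥ ![v, a, b, c] (p i)).symm
  simp only [a4PartialTrace, htrace, vecMulVec_mul_vecMulVec, vecMulVec_smul, trace_smul,
    smul_eq_mul, Algebra.smul_mul_assoc, smul_add, add_mulVec, smul_mulVec, one_mulVec,
    vecMulVec_mulVec, op_smul_eq_smul, dotProduct_add, dotProduct_smul, Fin.isValue,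
    cons_val_zero, cons_val, Fin.reduceXor, Fin.coe_ofNat_eq_mod, Nat.mod_succ, Nat.cast_ofNat,
    show (3 : ZMod 3) = 0 from rfl, AddChar.map_zero_eq_one, Circle.coe_one, star_one,
    Nat.succ_eq_add_one, Nat.reduceAdd, Fin.prod_univ_four, cons_val_one, one_mul, Fin.xor_zero,
    Nat.one_mod, Nat.cast_one, RCLike.star_def, Nat.reduceMod, hχ2]
  ring

theorem a4PartialTrace_posSemidef {X Y Z : Matrix n n ℂ}
    (hX : X.PosSemidef) (hY : Y.PosSemidef) (hZ : Z.PosSemidef) :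
    (a4PartialTrace (ZMod.toCircle (1 : ZMod 3)) X Y Z).PosSemidef := by
  obtain ⟨_, a, rfl⟩ := posSemidef_iff_eq_sum_vecMulVec.mp hX
  obtain ⟨_, b, rfl⟩ := posSemidef_iff_eq_sum_vecMulVec.mp hY
  obtain ⟨_, c, rfl⟩ := posSemidef_iff_eq_sum_vecMulVec.mp hZ
  refine posSemidef_of_forall_dotProduct_mulVec_nonneg fun v => ?_
  simp only [a4PartialTrace_sum, sum_mulVec, dotProduct_sum,
    dotProduct_a4PartialTrace_vecMulVec_mulVec]
  exact Finset.sum_nonneg fun _ _ => Finset.sum_nonneg fun _ _ => Finset.sum_nonneg fun _ _ =>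
    sum_star_mul_prod_dotProduct_nonneg a4Char _

end PartialTrace

/-- For PSD matrices `X, Y, Z` of trace one, with `ω = e^{2πi/3}`,
`L = tr(XY)Z + tr(XZ)Y + tr(YZ)X` and `M = tr(ZYX)·I + XY + YZ + ZX`, the
matrix `I + L + ωM + ω̄M*` is positive semidefinite. -/
theorem a4_degree_one_inequality (m : ℕ) (X Y Z : Matrix (Fin m) (Fin m) ℂ)
    (hX : X.PosSemidef) (hY : Y.PosSemidef) (hZ : Z.PosSemidef)
    (htX : X.trace = 1) (htY : Y.trace = 1) (htZ : Z.trace = 1)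
    (ω : ℂ) (hω : ω = Complex.exp (2 * Real.pi * Complex.I / 3))
    (L M : Matrix (Fin m) (Fin m) ℂ)
    (hL : L = (X * Y).trace • Z + (X * Z).trace • Y + (Y * Z).trace • X)
    (hM : M = (Z * Y * X).trace • (1 : Matrix (Fin m) (Fin m) ℂ)
      + X * Y + Y * Z + Z * X) :
    ((1 : Matrix (Fin m) (Fin m) ℂ) + L + ω • M + (conj ω) • Mᴴ).PosSemidef := by
  have hωχ : ω = ZMod.toCircle (1 : ZMod 3) := by
    rw [hω, ZMod.toCircle_apply, show (1 : ZMod 3).val = 1 from rfl]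
    push_cast
    ring_nf
  have hMH : Mᴴ = (X * Y * Z).trace • (1 : Matrix (Fin m) (Fin m) ℂ) + Y * X + Z * Y + X * Z := by
    simp [hM, conjTranspose_mul, hX.isHermitian.eq, hY.isHermitian.eq, hZ.isHermitian.eq,
      ← trace_conjTranspose, Matrix.mul_assoc]
  have hK : 1 + L + ω • M + conj ω • Mᴴ = a4PartialTrace ω X Y Z := by
    rw [a4PartialTrace, htX, htY, htZ, hL, hMH, hM]
    module
  rw [hK, hωχ]
  exact a4PartialTrace_posSemidef hX hY hZ
end

section
/- Permanent dominance for n = 3, the standard representation: for every positive semidefinite 3×3 complex matrix A, per(A) ≥ imm_{(2,1)}(A)/2, where imm_{(2,1)}(A) = 2∏_i A_{ii} − A_{11}A_{23}A_{32} − A_{22}A_{13}A_{31} − A_{33}A_{12}A_{21}. -/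
/-!
For Hermitian `A` with diagonal `d` and `a = A₀₁`, `b = A₁₂`, `c = A₀₂`, the gap
`per A - imm A / 2` is the real number `3/2 (d₀|b|² + d₁|c|² + d₂|a|²) + 2 Re (a b c̄)`.
Positive semidefiniteness gives `dᵢ ≥ 0` and, from a `2 × 2` principal minor, `|c|² ≤ d₀ d₂`;
then AM-GM bounds the cross term: `2 |a| |b| |c| ≤ 2 |a| |b| √(d₀ d₂) ≤ d₂ |a|² + d₀ |b|²`.
-/

open scoped ComplexOrder

open ComplexConjugate

namespace Matrix

theorem permanent_fin_three {R : Type*} [CommSemiring R] (A : Matrix (Fin 3) (Fin 3) R) :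
    A.permanent =
      A 0 0 * A 1 1 * A 2 2 + A 0 0 * A 1 2 * A 2 1
      + A 0 1 * A 1 0 * A 2 2 + A 0 1 * A 1 2 * A 2 0
      + A 0 2 * A 1 0 * A 2 1 + A 0 2 * A 1 1 * A 2 0 := by
  have huniv : (Finset.univ : Finset (Equiv.Perm (Fin 3))) =
      {1, .swap 0 1, .swap 0 2, .swap 1 2, .swap 0 1 * .swap 1 2, .swap 1 2 * .swap 0 1} := by
    decide
  simp +decide [permanent, huniv, Fin.prod_univ_three, Finset.sum_insert, Equiv.swap_apply_def]
  ring

theorem PosSemidef.norm_apply_sq_le {𝕜 n : Type*} [RCLike 𝕜] [Fintype n] {A : Matrix n n 𝕜}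
    (hA : A.PosSemidef) (i j : n) :
    ‖A i j‖ ^ 2 ≤ RCLike.re (A i i) * RCLike.re (A j j) := by
  have hminor := (hA.submatrix ![i, j]).det_nonneg
  simp only [det_fin_two, submatrix_apply, cons_val_zero, cons_val_one] at hminor
  rw [← hA.1.apply j i, ← hA.1.coe_re_apply_self i, ← hA.1.coe_re_apply_self j,
    RCLike.star_def, RCLike.mul_conj] at hminor
  exact_mod_cast sub_nonneg.mp hminor

end Matrix

theorem two_mul_mul_le_of_sq_le {x y z p q : ℝ} (hp : 0 ≤ p) (hq : 0 ≤ q) (hz : z ^ 2 ≤ p * q) :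
    2 * (x * y * z) ≤ q * x ^ 2 + p * y ^ 2 := by
  have hsq : (2 * (x * y * z)) ^ 2 ≤ (q * x ^ 2 + p * y ^ 2) ^ 2 := by
    nlinarith [mul_le_mul_of_nonneg_left hz (sq_nonneg (2 * x * y)),
      sq_nonneg (q * x ^ 2 - p * y ^ 2)]
  exact (abs_le_of_sq_le_sq hsq (by positivity)).trans' (le_abs_self _)

theorem Complex.neg_two_mul_re_mul_mul_conj_le (a b c : ℂ) {p q : ℝ} (hp : 0 ≤ p) (hq : 0 ≤ q)
    (hc : ‖c‖ ^ 2 ≤ p * q) :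
    -(2 * (a * b * conj c).re) ≤ q * ‖a‖ ^ 2 + p * ‖b‖ ^ 2 :=
  calc -(2 * (a * b * conj c).re) ≤ 2 * ‖a * b * conj c‖ := by
        linarith [neg_le_of_abs_le (abs_re_le_norm (a * b * conj c))]
    _ = 2 * (‖a‖ * ‖b‖ * ‖c‖) := by simp
    _ ≤ q * ‖a‖ ^ 2 + p * ‖b‖ ^ 2 := two_mul_mul_le_of_sq_le hp hq hc

/-- Permanent dominance for `n = 3` and the standard representation of `S_3`:
`per(A) ≥ imm_{(2,1)}(A) / 2` for positive semidefinite `A`, where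
`imm_{(2,1)}(A) = 2∏ᵢ Aᵢᵢ − A₁₁A₂₃A₃₂ − A₂₂A₁₃A₃₁ − A₃₃A₁₂A₂₁`. -/
theorem permanent_dominance_three (A : Matrix (Fin 3) (Fin 3) ℂ)
    (hA : A.PosSemidef) :
    (2 * ∏ i, A i i
        - A 0 0 * A 1 2 * A 2 1
        - A 1 1 * A 0 2 * A 2 0
        - A 2 2 * A 0 1 * A 1 0) / 2
      ≤ ∑ σ : Equiv.Perm (Fin 3), ∏ t, A t (σ t) := by
  have hdiag (i : Fin 3) : A i i = ((A i i).re : ℂ) := (hA.1.coe_re_apply_self i).symm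
  have hdiag_nonneg (i : Fin 3) : 0 ≤ (A i i).re := (Complex.nonneg_iff.mp hA.diag_nonneg).1
  have hconj (i j : Fin 3) : A j i = conj (A i j) := (hA.1.apply j i).symm
  set a := A 0 1
  set b := A 1 2
  set c := A 0 2
  have hgap_nonneg : 0 ≤ 3 / 2 * ((A 0 0).re * ‖b‖ ^ 2 + (A 1 1).re * ‖c‖ ^ 2
      + (A 2 2).re * ‖a‖ ^ 2) + 2 * (a * b * conj c).re := by
    have hcross := a.neg_two_mul_re_mul_mul_conj_le b c (hdiag_nonneg 0) (hdiag_nonneg 2)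
      (hA.norm_apply_sq_le 0 2)
    nlinarith [hdiag_nonneg 0, hdiag_nonneg 1, hdiag_nonneg 2]
  rw [← sub_nonneg]
  convert Complex.zero_le_real.mpr hgap_nonneg using 1
  rw [show ∑ σ : Equiv.Perm (Fin 3), ∏ t, A t (σ t) = A.transpose.permanent from rfl,
    Matrix.permanent_transpose, Matrix.permanent_fin_three, Fin.prod_univ_three,
    hconj 0 1, hconj 1 2, hconj 0 2, hdiag 0, hdiag 1, hdiag 2]
  have hre := Complex.add_conj (a * b * conj c)
  simp only [map_mul, Complex.conj_conj] at hre
  push_cast at hre ⊢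
  linear_combination (3 / 2 : ℂ) * ((A 0 0).re * Complex.mul_conj' b
    + (A 1 1).re * Complex.mul_conj' c + (A 2 2).re * Complex.mul_conj' a) + hre
end
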